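/- arXiv:2411.12653 — 2 statements merged into one kernel-verified Lean document; each statement's English description precedes it below -/
import Mathlib

section
/- (Lemma: deviation reduction to independent blocks.) Define ψ := sup_{f ∈ ℋ} (R_SPO(f) − R̂_{SPO,n}(f)), and for an independent block sample B̃ = (B̃_1, …, B̃_m) ∼ P̃ define ψ̃(B̃) := sup_{f ∈ ℋ} (R_SPO(f) − (1/m) ∑_{j=1}^m ĝ_f(B̃_j)). If the trajectory satisfies the (m, β)-independent-block approximation for some β ≥ 0, then for every ε ∈ ℝ: μ(ψ > ε) ≤ 2·P̃( ψ̃ − E_{P̃}[ψ̃] > ε − E_{P̃}[ψ̃] ) + 2mβ. -/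
open MeasureTheory
open scoped RealInnerProductSpace BigOperators

noncomputable section

abbrev Vec (d : ℕ) := EuclideanSpace ℝ (Fin d)

/-- The SPO loss: `ℓ_SPO(ŷ, y) = ⟨y, w*(ŷ)⟩ − ⟨y, w*(y)⟩`. -/
def lSPO {d : ℕ} (wStar : Vec d → Vec d) (yhat y : Vec d) : ℝ :=
  ⟪y, wStar yhat⟫ - ⟪y, wStar y⟫

/-- The linear optimization gap of `S` at `y`. -/
def omegaS {d : ℕ} (S : Set (Vec d)) (y : Vec d) : ℝ :=
  sSup ((fun w => ⟪y, w⟫) '' S) - sInf ((fun w => ⟪y, w⟫) '' S)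

/-- Stationarity of the sequence `Y`. -/
def IsStationarySPO {d : ℕ} {Ω : Type*} [MeasurableSpace Ω] (μ : Measure Ω)
    (Y : ℕ → Ω → Vec d) : Prop :=
  ∀ t k n : ℕ,
    μ.map (fun ω => fun i : Fin (n + 1) => Y (t + i) ω) =
      μ.map (fun ω => fun i : Fin (n + 1) => Y (t + k + i) ω)

/-- The SPO risk of a predictor with fixed memory `l`. -/
def RSPO {d : ℕ} {Ω : Type*} [MeasurableSpace Ω] (μ : Measure Ω)
    (Y : ℕ → Ω → Vec d) (wStar : Vec d → Vec d) (l : ℕ)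
    (f : (Fin l → Vec d) → Vec d) : ℝ :=
  ∫ ω, lSPO wStar (f (fun i => Y i ω)) (Y l ω) ∂μ

/-- The `j`-th extended block `Ê_{j+1} = (Y_{ja}, …, Y_{(j+1)a+l−1})` (0-indexed `j`). -/
def extBlock {d : ℕ} {Ω : Type*} (Y : ℕ → Ω → Vec d) (a l j : ℕ) (ω : Ω) :
    Fin (a + l) → Vec d :=
  fun i => Y (j * a + i) ω

/-- The block empirical SPO risk `ĝ_f(Ê)`. -/
def blockRisk {d : ℕ} (wStar : Vec d → Vec d) (a l : ℕ)
    (f : (Fin l → Vec d) → Vec d) (e : Fin (a + l) → Vec d) : ℝ :=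
  (a : ℝ)⁻¹ * ∑ i : Fin a, lSPO wStar
    (f (fun k => e ⟨i.1 + k.1, by have h1 := i.isLt; have h2 := k.isLt; omega⟩))
    (e ⟨i.1 + l, by have h1 := i.isLt; omega⟩)

/-- The empirical SPO risk `R̂_{SPO,n}(f)` over the length `n = 2am + l` trajectory. -/
def empRisk {d : ℕ} {Ω : Type*} (Y : ℕ → Ω → Vec d) (wStar : Vec d → Vec d)
    (a l m : ℕ) (f : (Fin l → Vec d) → Vec d) (ω : Ω) : ℝ :=
  ((2 * m : ℕ) : ℝ)⁻¹ * ∑ j : Fin (2 * m), blockRisk wStar a l f (extBlock Y a l j ω)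

/-- The common law `ν` of the extended blocks. -/
def nuBlock {d : ℕ} {Ω : Type*} [MeasurableSpace Ω] (μ : Measure Ω)
    (Y : ℕ → Ω → Vec d) (a l : ℕ) : Measure (Fin (a + l) → Vec d) :=
  μ.map (fun ω => extBlock Y a l 0 ω)

/-- The independent-blocks measure `P̃ = ν^{⊗m}`. -/
def Ptilde {d : ℕ} {Ω : Type*} [MeasurableSpace Ω] (μ : Measure Ω)
    (Y : ℕ → Ω → Vec d) (a l m : ℕ) : Measure (Fin m → Fin (a + l) → Vec d) :=
  Measure.pi fun _ : Fin m => nuBlock μ Y a l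

/-- The `m` odd extended blocks `𝒴₀ = (Ê_1, Ê_3, …, Ê_{2m−1})`. -/
def oddBlocks {d : ℕ} {Ω : Type*} (Y : ℕ → Ω → Vec d) (a l m : ℕ) (ω : Ω) :
    Fin m → Fin (a + l) → Vec d :=
  fun j => extBlock Y a l (2 * j) ω

/-- The `(m, β)`-independent-block approximation. -/
def IndepBlockApprox {d : ℕ} {Ω : Type*} [MeasurableSpace Ω] (μ : Measure Ω)
    (Y : ℕ → Ω → Vec d) (a l m : ℕ) (β : ℝ) : Prop :=
  ∀ A : Set (Fin m → Fin (a + l) → Vec d), MeasurableSet A →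
    |(μ {ω | oddBlocks Y a l m ω ∈ A}).toReal - (Ptilde μ Y a l m A).toReal| ≤ m * β

/-- The empirical block Rademacher complexity of `ℋ` given blocks `B`. -/
def radEmp {d : ℕ} (wStar : Vec d → Vec d) (a l m : ℕ)
    (H : Set ((Fin l → Vec d) → Vec d)) (B : Fin m → Fin (a + l) → Vec d) : ℝ :=
  ((2 : ℝ) ^ m)⁻¹ * ∑ s : Fin m → Bool,
    ⨆ f : H, (m : ℝ)⁻¹ * ∑ j : Fin m,
      (if s j then (1 : ℝ) else -1) * blockRisk wStar a l f.1 (B j)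

/-- The block Rademacher complexity `ℜ_m(ℋ)`. -/
def radExp {d : ℕ} {Ω : Type*} [MeasurableSpace Ω] (μ : Measure Ω)
    (Y : ℕ → Ω → Vec d) (wStar : Vec d → Vec d) (a l m : ℕ)
    (H : Set ((Fin l → Vec d) → Vec d)) : ℝ :=
  ∫ B, radEmp wStar a l m H B ∂(Ptilde μ Y a l m)

/-- The uniform deviation `ψ` over the trajectory. -/
def devTraj {d : ℕ} {Ω : Type*} [MeasurableSpace Ω] (μ : Measure Ω)
    (Y : ℕ → Ω → Vec d) (wStar : Vec d → Vec d) (a l m : ℕ)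
    (H : Set ((Fin l → Vec d) → Vec d)) (ω : Ω) : ℝ :=
  ⨆ f : H, (RSPO μ Y wStar l f.1 - empRisk Y wStar a l m f.1 ω)

/-- The uniform deviation `ψ̃` over an independent block sample. -/
def devBlocks {d : ℕ} {Ω : Type*} [MeasurableSpace Ω] (μ : Measure Ω)
    (Y : ℕ → Ω → Vec d) (wStar : Vec d → Vec d) (a l m : ℕ)
    (H : Set ((Fin l → Vec d) → Vec d)) (B : Fin m → Fin (a + l) → Vec d) : ℝ :=
  ⨆ f : H, (RSPO μ Y wStar l f.1 -
    (m : ℝ)⁻¹ * ∑ j : Fin m, blockRisk wStar a l f.1 (B j))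

/-!
Splitting the `2m` extended blocks into the odd ones and the even ones writes the empirical
risk as the mean of two block averages, so `ψ ≤ (ψ̃(odd blocks) + ψ̃(even blocks)) / 2` and
`{ψ > ε}` is covered by the events that the odd, resp. the even, blocks fall into
`A = {ψ̃ > ε}`. The even blocks are the odd ones shifted by `a`, so by stationarity both events
have the same probability, and the independent-block approximation bounds it by `P̃(A) + mβ`.
-/

theorem Finset.sum_range_two_mul {M : Type*} [AddCommMonoid M] (m : ℕ) (g : ℕ → M) :
    ∑ i ∈ Finset.range (2 * m), g i = ∑ i ∈ Finset.range m, (g (2 * i) + g (2 * i + 1)) := by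
  induction m with
  | zero => simp
  | succ k ih =>
    rw [show 2 * (k + 1) = 2 * k + 1 + 1 by ring, Finset.sum_range_succ, Finset.sum_range_succ,
      ih, Finset.sum_range_succ, add_assoc]

theorem iSup_sub_half_add_le {ι : Sort*} (r p q : ι → ℝ)
    (hp : BddAbove (Set.range fun i => r i - p i)) (hq : BddAbove (Set.range fun i => r i - q i)) :
    ⨆ i, (r i - (p i + q i) / 2) ≤ ((⨆ i, (r i - p i)) + ⨆ i, (r i - q i)) / 2 := by
  rcases isEmpty_or_nonempty ι with hι | hι
  · simp [Real.iSup_of_isEmpty]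
  · exact ciSup_le fun i => by linarith [le_ciSup hp i, le_ciSup hq i]

section SPOLoss

variable {d : ℕ} {wStar : Vec d → Vec d}

theorem lSPO_nonneg {S : Set (Vec d)}
    (hOracle : ∀ c : Vec d, wStar c ∈ S ∧ ∀ w ∈ S, ⟪c, wStar c⟫ ≤ ⟪c, w⟫) (yhat y : Vec d) :
    0 ≤ lSPO wStar yhat y :=
  sub_nonneg.mpr ((hOracle y).2 _ (hOracle yhat).1)

theorem lSPO_le_norm_mul {C : ℝ} (hC : ∀ c, ‖wStar c‖ ≤ C) (yhat y : Vec d) :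
    lSPO wStar yhat y ≤ ‖y‖ * (2 * C) :=
  calc lSPO wStar yhat y = ⟪y, wStar yhat - wStar y⟫ := (inner_sub_right _ _ _).symm
    _ ≤ ‖y‖ * ‖wStar yhat - wStar y‖ := real_inner_le_norm _ _
    _ ≤ ‖y‖ * (2 * C) := by
      gcongr
      exact (norm_sub_le _ _).trans (by linarith [hC yhat, hC y])

theorem blockRisk_nonneg (hloss : ∀ yhat y, 0 ≤ lSPO wStar yhat y) (a l : ℕ)
    (f : (Fin l → Vec d) → Vec d) (e : Fin (a + l) → Vec d) : 0 ≤ blockRisk wStar a l f e :=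
  mul_nonneg (by positivity) (Finset.sum_nonneg fun _ _ => hloss _ _)

theorem measurable_blockRisk (hwStar : Measurable wStar) (a l : ℕ)
    {f : (Fin l → Vec d) → Vec d} (hf : Measurable f) : Measurable (blockRisk wStar a l f) := by
  refine Measurable.const_mul (Finset.measurable_sum _ fun i _ => ?_) _
  have hwindow : Measurable fun e : Fin (a + l) → Vec d =>
      f fun k => e ⟨i.1 + k.1, by omega⟩ :=
    hf.comp (measurable_pi_lambda _ fun k => measurable_pi_apply _)
  have hlast : Measurable fun e : Fin (a + l) → Vec d => e ⟨i.1 + l, by omega⟩ :=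
    measurable_pi_apply _
  exact (hlast.inner (hwStar.comp hwindow)).sub (hlast.inner (hwStar.comp hlast))

end SPOLoss

section Risk

variable {d : ℕ} {Ω : Type*} [MeasurableSpace Ω] {μ : Measure Ω} [IsProbabilityMeasure μ]
  {Y : ℕ → Ω → Vec d} {wStar : Vec d → Vec d} {l : ℕ}

theorem RSPO_le {K : ℝ} (hloss : ∀ yhat y, 0 ≤ lSPO wStar yhat y)
    (hK : ∀ᵐ ω ∂μ, ∀ yhat, lSPO wStar yhat (Y l ω) ≤ K) (f : (Fin l → Vec d) → Vec d) :
    RSPO μ Y wStar l f ≤ K := by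
  have := integral_mono_of_nonneg (Filter.Eventually.of_forall fun ω => hloss _ _)
    (integrable_const K) (hK.mono fun ω h => h (f fun i => Y i ω))
  simpa [RSPO] using this

theorem exists_forall_RSPO_le {S : Set (Vec d)} (hSc : IsCompact S)
    (hOracle : ∀ c : Vec d, wStar c ∈ S ∧ ∀ w ∈ S, ⟪c, wStar c⟫ ≤ ⟪c, w⟫)
    {𝒴 : Set (Vec d)} (h𝒴 : Bornology.IsBounded 𝒴) (hYmem : ∀ᵐ ω ∂μ, Y l ω ∈ 𝒴) :
    ∃ K, ∀ f, RSPO μ Y wStar l f ≤ K := by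
  obtain ⟨C₁, hC₁⟩ := h𝒴.exists_norm_le
  obtain ⟨C₂, hC₂⟩ := hSc.isBounded.exists_norm_le
  have hw : ∀ c, ‖wStar c‖ ≤ C₂ := fun c => hC₂ _ (hOracle c).1
  have hC₂0 : 0 ≤ 2 * C₂ := by linarith [(norm_nonneg _).trans (hw 0)]
  refine ⟨C₁ * (2 * C₂), RSPO_le (lSPO_nonneg hOracle) ?_⟩
  filter_upwards [hYmem] with ω hω yhat
  exact (lSPO_le_norm_mul hw _ _).trans (by gcongr; exact hC₁ _ hω)

end Risk

def evenBlocks {d : ℕ} {Ω : Type*} (Y : ℕ → Ω → Vec d) (a l m : ℕ) (ω : Ω) :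
    Fin m → Fin (a + l) → Vec d :=
  fun j => extBlock Y a l (2 * j + 1) ω

section Deviation

variable {d : ℕ} {Ω : Type*} {Y : ℕ → Ω → Vec d} {wStar : Vec d → Vec d} {a l m : ℕ}

theorem empRisk_eq_half_add (f : (Fin l → Vec d) → Vec d) (ω : Ω) :
    empRisk Y wStar a l m f ω =
      ((m : ℝ)⁻¹ * ∑ j : Fin m, blockRisk wStar a l f (oddBlocks Y a l m ω j) +
        (m : ℝ)⁻¹ * ∑ j : Fin m, blockRisk wStar a l f (evenBlocks Y a l m ω j)) / 2 := by
  have hsplit := Finset.sum_range_two_mul m fun j => blockRisk wStar a l f (extBlock Y a l j ω)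
  simp only [← Fin.sum_univ_eq_sum_range] at hsplit
  rw [empRisk, hsplit, Finset.sum_add_distrib, Nat.cast_mul, Nat.cast_two, mul_inv]
  simp only [oddBlocks, evenBlocks]
  ring

variable [MeasurableSpace Ω] {μ : Measure Ω} {H : Set ((Fin l → Vec d) → Vec d)}

-- Real `⨆` is junk (`0`) on a family that is not bounded above; this bound rules that out.
theorem bddAbove_range_RSPO_sub_blockAvg {K : ℝ} (hK : ∀ f, RSPO μ Y wStar l f ≤ K)
    (hloss : ∀ yhat y, 0 ≤ lSPO wStar yhat y) (B : Fin m → Fin (a + l) → Vec d) :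
    BddAbove (Set.range fun f : H =>
      RSPO μ Y wStar l f.1 - (m : ℝ)⁻¹ * ∑ j : Fin m, blockRisk wStar a l f.1 (B j)) := by
  refine ⟨K, Set.forall_mem_range.mpr fun f => ?_⟩
  have : 0 ≤ (m : ℝ)⁻¹ * ∑ j : Fin m, blockRisk wStar a l f.1 (B j) :=
    mul_nonneg (by positivity) (Finset.sum_nonneg fun j _ => blockRisk_nonneg hloss a l _ _)
  linarith [hK f.1]

theorem devTraj_le_half_add {K : ℝ} (hK : ∀ f, RSPO μ Y wStar l f ≤ K)
    (hloss : ∀ yhat y, 0 ≤ lSPO wStar yhat y) (ω : Ω) :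
    devTraj μ Y wStar a l m H ω ≤
      (devBlocks μ Y wStar a l m H (oddBlocks Y a l m ω) +
        devBlocks μ Y wStar a l m H (evenBlocks Y a l m ω)) / 2 := by
  simp only [devTraj, empRisk_eq_half_add]
  exact iSup_sub_half_add_le _ _ _ (bddAbove_range_RSPO_sub_blockAvg hK hloss _)
    (bddAbove_range_RSPO_sub_blockAvg hK hloss _)

theorem measurable_devBlocks (hwStar : Measurable wStar) (hHcount : H.Countable)
    (hHmeas : ∀ f ∈ H, Measurable f) : Measurable (devBlocks μ Y wStar a l m H) := by
  have : Countable H := hHcount.to_subtype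
  refine Measurable.iSup fun f => (Measurable.const_mul ?_ _).const_sub _
  exact Finset.measurable_sum _ fun j _ =>
    (measurable_blockRisk hwStar a l (hHmeas f.1 f.2)).comp (measurable_pi_apply j)

end Deviation

section Stationarity

variable {d : ℕ} {Ω : Type*} [MeasurableSpace Ω] {μ : Measure Ω} {Y : ℕ → Ω → Vec d}

theorem measurable_oddBlocks (hY : ∀ t, Measurable (Y t)) (a l m : ℕ) :
    Measurable (oddBlocks Y a l m) :=
  measurable_pi_lambda _ fun _ => measurable_pi_lambda _ fun _ => hY _

theorem measurable_evenBlocks (hY : ∀ t, Measurable (Y t)) (a l m : ℕ) :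
    Measurable (evenBlocks Y a l m) :=
  measurable_pi_lambda _ fun _ => measurable_pi_lambda _ fun _ => hY _

theorem IsStationarySPO.map_shift_eq (hstat : IsStationarySPO μ Y) (hY : ∀ t, Measurable (Y t))
    {ι : Type*} [Finite ι] (k : ℕ) (idx : ι → ℕ) :
    μ.map (fun ω i => Y (k + idx i) ω) = μ.map (fun ω i => Y (idx i) ω) := by
  obtain ⟨N, hN⟩ := (Set.finite_range idx).bddAbove
  have hlt : ∀ i, idx i < N + 1 := fun i => Nat.lt_succ_of_le (hN ⟨i, rfl⟩)
  let window : (Fin (N + 1) → Vec d) → ι → Vec d := fun v i => v ⟨idx i, hlt i⟩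
  have hwindow : Measurable window := measurable_pi_lambda _ fun i => measurable_pi_apply _
  have hshift (s : ℕ) : (fun ω i => Y (s + idx i) ω) =
      window ∘ fun ω (j : Fin (N + 1)) => Y (s + j) ω := rfl
  rw [hshift k, ← zero_add k, ← Measure.map_map hwindow (measurable_pi_lambda _ fun _ => hY _),
    ← hstat 0 k N, Measure.map_map hwindow (measurable_pi_lambda _ fun _ => hY _)]
  simp only [zero_add]
  rfl

theorem map_evenBlocks_eq_map_oddBlocks (hstat : IsStationarySPO μ Y)
    (hY : ∀ t, Measurable (Y t)) (a l m : ℕ) :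
    μ.map (evenBlocks Y a l m) = μ.map (oddBlocks Y a l m) := by
  let e := MeasurableEquiv.curry (Fin m) (Fin (a + l)) (Vec d)
  have hcurry (k : ℕ) : (fun ω (j : Fin m) (i : Fin (a + l)) => Y (k + (2 * j * a + i)) ω) =
      e ∘ fun ω (p : Fin m × Fin (a + l)) => Y (k + (2 * p.1 * a + p.2)) ω := rfl
  have heven : evenBlocks Y a l m =
      fun ω (j : Fin m) (i : Fin (a + l)) => Y (a + (2 * j * a + i)) ω := by
    funext ω j i; simp only [evenBlocks, extBlock]; ring_nf
  have hodd : oddBlocks Y a l m =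
      fun ω (j : Fin m) (i : Fin (a + l)) => Y (0 + (2 * j * a + i)) ω := by
    funext ω j i; simp only [oddBlocks, extBlock]; ring_nf
  rw [heven, hodd, hcurry, hcurry, ← Measure.map_map e.measurable
      (measurable_pi_lambda _ fun _ => hY _), ← Measure.map_map e.measurable
      (measurable_pi_lambda _ fun _ => hY _), hstat.map_shift_eq hY a]
  simp only [zero_add]

end Stationarity

theorem deviation_reduction_to_independent_blocks_general {d : ℕ} {Ω : Type*} [MeasurableSpace Ω]
    (μ : Measure Ω) [IsProbabilityMeasure μ]
    (S : Set (Vec d)) (hSc : IsCompact S)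
    (wStar : Vec d → Vec d) (hwStar : Measurable wStar)
    (hOracle : ∀ c : Vec d, wStar c ∈ S ∧ ∀ w ∈ S, ⟪c, wStar c⟫ ≤ ⟪c, w⟫)
    (Y : ℕ → Ω → Vec d) (hY : ∀ t, Measurable (Y t)) (hstat : IsStationarySPO μ Y)
    (l a m : ℕ)
    (H : Set ((Fin l → Vec d) → Vec d)) (hHcount : H.Countable)
    (hHmeas : ∀ f ∈ H, Measurable f)
    (𝒴 : Set (Vec d)) (h𝒴 : Bornology.IsBounded 𝒴) (hYmem : ∀ t, ∀ᵐ ω ∂μ, Y t ω ∈ 𝒴)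
    (β : ℝ) (hIB : IndepBlockApprox μ Y a l m β) :
    ∀ ε : ℝ,
      (μ {ω | devTraj μ Y wStar a l m H ω > ε}).toReal ≤
        2 * ((Ptilde μ Y a l m) {B | devBlocks μ Y wStar a l m H B -
              (∫ B', devBlocks μ Y wStar a l m H B' ∂(Ptilde μ Y a l m)) >
            ε - (∫ B', devBlocks μ Y wStar a l m H B' ∂(Ptilde μ Y a l m))}).toReal
          + 2 * m * β := by
  intro ε
  obtain ⟨K, hK⟩ := exists_forall_RSPO_le hSc hOracle h𝒴 (hYmem l)
  set A := {B | ε < devBlocks μ Y wStar a l m H B}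
  have hA : MeasurableSet A :=
    measurableSet_lt measurable_const (measurable_devBlocks hwStar hHcount hHmeas)
  have hcover : {ω | devTraj μ Y wStar a l m H ω > ε} ⊆
      oddBlocks Y a l m ⁻¹' A ∪ evenBlocks Y a l m ⁻¹' A := by
    intro ω (hω : ε < devTraj μ Y wStar a l m H ω)
    by_contra h
    simp only [Set.mem_union, Set.mem_preimage, Set.mem_ofPred_eq, not_or, not_lt, A] at h
    linarith [devTraj_le_half_add (a := a) (m := m) (H := H) hK (lSPO_nonneg hOracle) ω]
  have heven : μ.real (evenBlocks Y a l m ⁻¹' A) = μ.real (oddBlocks Y a l m ⁻¹' A) := by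
    rw [measureReal_def, measureReal_def, ← Measure.map_apply (measurable_evenBlocks hY a l m) hA,
      ← Measure.map_apply (measurable_oddBlocks hY a l m) hA,
      map_evenBlocks_eq_map_oddBlocks hstat hY]
  have hodd : μ.real (oddBlocks Y a l m ⁻¹' A) ≤ (Ptilde μ Y a l m A).toReal + m * β :=
    sub_le_iff_le_add'.mp (abs_le.mp (hIB A hA)).2
  have hlevel : {B | devBlocks μ Y wStar a l m H B -
      (∫ B', devBlocks μ Y wStar a l m H B' ∂(Ptilde μ Y a l m)) >
        ε - (∫ B', devBlocks μ Y wStar a l m H B' ∂(Ptilde μ Y a l m))} = A := by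
    ext B
    simp only [Set.mem_ofPred_eq, gt_iff_lt, sub_lt_sub_iff_right, A]
  rw [hlevel]
  calc μ.real {ω | devTraj μ Y wStar a l m H ω > ε}
      ≤ μ.real (oddBlocks Y a l m ⁻¹' A) + μ.real (evenBlocks Y a l m ⁻¹' A) :=
        (measureReal_mono hcover).trans (measureReal_union_le _ _)
    _ ≤ _ := by linarith

/-- Deviation reduction to independent blocks. -/
theorem deviation_reduction_to_independent_blocks {d : ℕ} {Ω : Type*} [MeasurableSpace Ω]
    (μ : Measure Ω) [IsProbabilityMeasure μ]
    (S : Set (Vec d)) (hS : S.Nonempty) (hSc : IsCompact S)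
    (wStar : Vec d → Vec d) (hwStar : Measurable wStar)
    (hOracle : ∀ c : Vec d, wStar c ∈ S ∧ ∀ w ∈ S, ⟪c, wStar c⟫ ≤ ⟪c, w⟫)
    (Y : ℕ → Ω → Vec d) (hY : ∀ t, Measurable (Y t)) (hstat : IsStationarySPO μ Y)
    (l a m n : ℕ) (hl : 1 ≤ l) (ha : l < a) (hm : 1 ≤ m) (hn : n = 2 * a * m + l)
    (H : Set ((Fin l → Vec d) → Vec d)) (hHcount : H.Countable)
    (hHmeas : ∀ f ∈ H, Measurable f)
    (𝒴 : Set (Vec d)) (h𝒴 : Bornology.IsBounded 𝒴) (hYmem : ∀ t, ∀ᵐ ω ∂μ, Y t ω ∈ 𝒴)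
    (β : ℝ) (hβ : 0 ≤ β) (hIB : IndepBlockApprox μ Y a l m β) :
    ∀ ε : ℝ,
      (μ {ω | devTraj μ Y wStar a l m H ω > ε}).toReal ≤
        2 * ((Ptilde μ Y a l m) {B | devBlocks μ Y wStar a l m H B -
              (∫ B', devBlocks μ Y wStar a l m H B' ∂(Ptilde μ Y a l m)) >
            ε - (∫ B', devBlocks μ Y wStar a l m H B' ∂(Ptilde μ Y a l m))}).toReal
          + 2 * m * β :=
  deviation_reduction_to_independent_blocks_general μ S hSc wStar hwStar hOracle Y hY hstat l a m H
    hHcount hHmeas 𝒴 h𝒴 hYmem β hIB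
end
end

section
/- (Lemma of Yu, blocking lemma.) Assume that for each i ∈ {1, …, m−1} and every measurable set C ⊆ E^i × E, |μ((Z_1, …, Z_i, Z_{i+1}) ∈ C) − ((joint law of (Z_1, …, Z_i)) ⊗ (law of Z_{i+1}))(C)| ≤ β. Then for every measurable set A ⊆ E^m, |μ((Z_1, …, Z_m) ∈ A) − (law(Z_1) ⊗ law(Z_2) ⊗ ⋯ ⊗ law(Z_m))(A)| ≤ (m−1)·β. -/
/-!
Induction on the number of variables. Splitting `(Z_1, …, Z_m)` into the prefix
`(Z_1, …, Z_{m-1})` and the last variable identifies sets of `E^m` with sets of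
`E^{m-1} × E`. The hypothesis at the last index puts the joint law within `β` of
`law(prefix) ⊗ law(Z_m)`; integrating over the slices, tensoring with `law(Z_m)` does not
increase the distance between two laws on measurable sets, so the inductive bound
`(m - 2) β` for the prefix carries over to the full product.
-/

open MeasureTheory

theorem abs_measureReal_prod_sub_le {X Y : Type*} [MeasurableSpace X] [MeasurableSpace Y]
    {P Q : Measure X} [IsFiniteMeasure P] [IsFiniteMeasure Q]
    (ν : Measure Y) [IsFiniteMeasure ν] {c : ℝ}
    (h : ∀ B, MeasurableSet B → |P.real B - Q.real B| ≤ c)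
    {C : Set (X × Y)} (hC : MeasurableSet C) :
    |(P.prod ν).real C - (Q.prod ν).real C| ≤ c * ν.real Set.univ := by
  have integral_slices : ∀ R : Measure X, [IsFiniteMeasure R] →
      (R.prod ν).real C = ∫ y, R.real ((·, y) ⁻¹' C) ∂ν ∧
        Integrable (fun y => R.real ((·, y) ⁻¹' C)) ν := by
    intro R _
    have hmeas := (measurable_measure_prodMk_right (μ := R) hC).ennreal_toReal
    refine ⟨?_, .of_bound hmeas.aestronglyMeasurable (R.real Set.univ) (.of_forall fun y => ?_)⟩
    · rw [measureReal_def, Measure.prod_apply_symm hC,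
        ← integral_toReal (measurable_measure_prodMk_right hC).aemeasurable
          (.of_forall fun y => measure_lt_top _ _)]
      rfl
    · rw [Real.norm_of_nonneg measureReal_nonneg]
      exact measureReal_mono (Set.subset_univ _)
  obtain ⟨hP, hPi⟩ := integral_slices P
  obtain ⟨hQ, hQi⟩ := integral_slices Q
  rw [hP, hQ, ← integral_sub hPi hQi]
  exact norm_integral_le_of_norm_le_const
    (.of_forall fun y => (Real.norm_eq_abs _).trans_le (h _ (measurable_prodMk_right hC)))

def MeasurableEquiv.piFinInitLast (α : Type*) [MeasurableSpace α] (n : ℕ) :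
    (Fin (n + 1) → α) ≃ᵐ (Fin n → α) × α :=
  (piFinSuccAbove (fun _ => α) (Fin.last n)).trans prodComm

theorem MeasurableEquiv.piFinInitLast_apply {α : Type*} [MeasurableSpace α] {n : ℕ}
    (x : Fin (n + 1) → α) : piFinInitLast α n x = (Fin.init x, x (Fin.last n)) := by
  ext i
  · show x ((Fin.last n).succAbove i) = x i.castSucc
    rw [Fin.succAbove_last]
  · rfl

theorem measurePreserving_piFinInitLast {α : Type*} [MeasurableSpace α] {n : ℕ}
    (μ : Fin (n + 1) → Measure α) [∀ i, SigmaFinite (μ i)] :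
    MeasurePreserving (MeasurableEquiv.piFinInitLast α n) (Measure.pi μ)
      ((Measure.pi fun i => μ i.castSucc).prod (μ (Fin.last n))) := by
  have := Measure.measurePreserving_swap.comp (measurePreserving_piFinSuccAbove μ (Fin.last n))
  simp only [Fin.succAbove_last] at this
  exact this

section

variable {Ω E : Type*} [MeasurableSpace Ω] [MeasurableSpace E]

-- The hypothesis of the blocking lemma, with `Z` indexed from `0`: `Z i` is `β`-close to
-- independent of `(Z 0, …, Z (i - 1))`.
def IsNearlyIndepOfPrefixes {m : ℕ} (μ : Measure Ω) (Z : Fin m → Ω → E) (β : ℝ) : Prop :=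
  ∀ (i : ℕ) (_ : 1 ≤ i) (hi2 : i < m),
    ∀ C : Set ((Fin i → E) × E), MeasurableSet C →
      |(μ {ω | ((fun k : Fin i => Z ⟨k.1, k.isLt.trans hi2⟩ ω), Z ⟨i, hi2⟩ ω) ∈ C}).toReal -
        (((μ.map (fun ω => fun k : Fin i => Z ⟨k.1, k.isLt.trans hi2⟩ ω)).prod
          (μ.map (Z ⟨i, hi2⟩))) C).toReal| ≤ β

theorem IsNearlyIndepOfPrefixes.castSucc {μ : Measure Ω} {n : ℕ} {Z : Fin (n + 1) → Ω → E}
    {β : ℝ} (h : IsNearlyIndepOfPrefixes μ Z β) :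
    IsNearlyIndepOfPrefixes μ (fun k => Z k.castSucc) β :=
  fun i hi1 hi2 => h i hi1 (hi2.trans n.lt_succ_self)

theorem IsNearlyIndepOfPrefixes.abs_measureReal_sub_pi_le {μ : Measure Ω}
    [IsProbabilityMeasure μ] {β : ℝ} :
    ∀ {n : ℕ} {Z : Fin (n + 1) → Ω → E}, (∀ k, Measurable (Z k)) →
      IsNearlyIndepOfPrefixes μ Z β → ∀ {A : Set (Fin (n + 1) → E)}, MeasurableSet A →
        |μ.real {ω | (fun k => Z k ω) ∈ A} - (Measure.pi fun k => μ.map (Z k)).real A| ≤ n * β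
  | 0, Z, hZ, _, A, hA => by
    have hjoint : Measurable fun ω k => Z k ω := measurable_pi_lambda _ hZ
    change |μ.real ((fun ω k => Z k ω) ⁻¹' A) - _| ≤ _
    rw [← map_measureReal_apply hjoint hA,
      (ProbabilityTheory.iIndepFun.of_subsingleton (ι := Fin 1)).map_fun_eq_pi_map
        fun k => (hZ k).aemeasurable]
    simp
  | n + 1, Z, hZ, h, A, hA => by
    set e := MeasurableEquiv.piFinInitLast E (n + 1)
    set X : Ω → Fin (n + 1) → E := fun ω k => Z k.castSucc ω
    set Y := Z (Fin.last (n + 1))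
    have hX : Measurable X := measurable_pi_lambda _ fun k => hZ _
    have : IsProbabilityMeasure (μ.map Y) := Measure.isProbabilityMeasure_map (hZ _).aemeasurable
    set C := e.symm ⁻¹' A
    have hC : MeasurableSet C := e.symm.measurable hA
    have hjoint : {ω | (fun k => Z k ω) ∈ A} = {ω | (X ω, Y ω) ∈ C} := by
      ext ω
      rw [Set.mem_ofPred_eq, ← e.symm_apply_apply (fun k => Z k ω),
        MeasurableEquiv.piFinInitLast_apply]
      rfl
    have hpi : (Measure.pi fun k => μ.map (Z k)).real A =
        ((Measure.pi fun k => μ.map (Z k.castSucc)).prod (μ.map Y)).real C :=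
      (congrArg _ (e.symm.symm_preimage_preimage A).symm).trans
        ((measurePreserving_piFinInitLast _).measureReal_preimage hC.nullMeasurableSet)
    have hlast : |μ.real {ω | (X ω, Y ω) ∈ C} - ((μ.map X).prod (μ.map Y)).real C| ≤ β :=
      h (n + 1) (Nat.le_add_left 1 n) (n + 1).lt_succ_self C hC
    have hprefix := abs_measureReal_prod_sub_le (P := μ.map X)
      (Q := Measure.pi fun k => μ.map (Z k.castSucc)) (μ.map Y) (c := n * β) (fun B hB => by
      rw [map_measureReal_apply hX hB]
      exact abs_measureReal_sub_pi_le (fun k => hZ _) h.castSucc hB) hC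
    rw [probReal_univ, mul_one] at hprefix
    rw [hjoint, hpi]
    push_cast
    linarith [abs_sub_le (μ.real {ω | (X ω, Y ω) ∈ C}) (((μ.map X).prod (μ.map Y)).real C)
      (((Measure.pi fun k => μ.map (Z k.castSucc)).prod (μ.map Y)).real C)]

end

theorem blocking_lemma_general {E Ω : Type*} [MeasurableSpace E] [MeasurableSpace Ω]
    (μ : Measure Ω) [IsProbabilityMeasure μ] (m : ℕ) (hm : 2 ≤ m)
    (Z : Fin m → Ω → E) (hZ : ∀ k, Measurable (Z k)) (β : ℝ)
    (h : ∀ (i : ℕ) (_ : 1 ≤ i) (hi2 : i < m),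
      ∀ C : Set ((Fin i → E) × E), MeasurableSet C →
        |(μ {ω | ((fun k : Fin i => Z ⟨k.1, k.isLt.trans hi2⟩ ω), Z ⟨i, hi2⟩ ω) ∈ C}).toReal -
          (((μ.map (fun ω => fun k : Fin i => Z ⟨k.1, k.isLt.trans hi2⟩ ω)).prod
            (μ.map (Z ⟨i, hi2⟩))) C).toReal| ≤ β) :
    ∀ A : Set (Fin m → E), MeasurableSet A →
      |(μ {ω | (fun k => Z k ω) ∈ A}).toReal -
        (Measure.pi (fun k => μ.map (Z k)) A).toReal| ≤ (m - 1 : ℝ) * β := by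
  obtain ⟨n, rfl⟩ : ∃ n, m = n + 1 := ⟨m - 1, by omega⟩
  intro A hA
  rw [show ((n + 1 : ℕ) - 1 : ℝ) = n by push_cast; ring]
  exact IsNearlyIndepOfPrefixes.abs_measureReal_sub_pi_le hZ h hA

/-- Yu's blocking lemma: if each `Z_{i+1}` is nearly independent (up to `β`, in total
variation on measurable rectangles of the appropriate product space) of the preceding
block `(Z_1, …, Z_i)`, then the joint law of `(Z_1, …, Z_m)` is within `(m − 1)·β` of
the product of the marginal laws, on every measurable set. -/
theorem blocking_lemma {E Ω : Type*} [MeasurableSpace E] [MeasurableSpace Ω]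
    (μ : Measure Ω) [IsProbabilityMeasure μ] (m : ℕ) (hm : 2 ≤ m)
    (Z : Fin m → Ω → E) (hZ : ∀ k, Measurable (Z k)) (β : ℝ) (hβ : 0 ≤ β)
    (h : ∀ (i : ℕ) (_ : 1 ≤ i) (hi2 : i < m),
      ∀ C : Set ((Fin i → E) × E), MeasurableSet C →
        |(μ {ω | ((fun k : Fin i => Z ⟨k.1, k.isLt.trans hi2⟩ ω), Z ⟨i, hi2⟩ ω) ∈ C}).toReal -
          (((μ.map (fun ω => fun k : Fin i => Z ⟨k.1, k.isLt.trans hi2⟩ ω)).prod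
            (μ.map (Z ⟨i, hi2⟩))) C).toReal| ≤ β) :
    ∀ A : Set (Fin m → E), MeasurableSet A →
      |(μ {ω | (fun k => Z k ω) ∈ A}).toReal -
        (Measure.pi (fun k => μ.map (Z k)) A).toReal| ≤ (m - 1 : ℝ) * β :=
  blocking_lemma_general μ m hm Z hZ β h
end
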